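/- If 𝒜ℐ₂ is strongly non-conflating (interpretations being compatible) and r is a strict refinement mapping from 𝒜ℐ₁ to 𝒜ℐ₂ (conditions S1–S4 hold), then 𝒜ℐ₁ ⊑_r 𝒜ℐ₂ (r satisfies conditions T1–T3). -/

import Mathlib

structure Machine (S A D O : Type) where
  s0 : S
  step : S → A → S
  dom : A → D
  obs : D → S → O

namespace Machine

def run {S A D O : Type} (M : Machine S A D O) (α : List A) : S :=
  α.foldl M.step M.s0

end Machine
/-- An extended architecture: `edge u v = none` means no edge, `edge u v = some none`
means an edge labelled `⊤`, and `edge u v = some (some f)` means an edge labelled by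
the filter-function name `f`.  There is at most one label per ordered pair by
construction, and the relation is reflexive with label `⊤`. -/
structure ExtArch (D L : Type) where
  edge : D → D → Option (Option L)
  refl : ∀ u, edge u u = some none

/-- Values of the `tf` function and of filter-function interpretations:
`eps` is the empty value ε, `base v` an arbitrary basic value, and
`pair σ a` the pair `(σ, a)` of a `tf` value and an action. -/
inductive TFVal (A V : Type) where
  | eps : TFVal A V
  | base : V → TFVal A V
  | pair : List (TFVal A V) → A → TFVal A V

/-- `σ ⌢ x`: appends `x` as a single new last element unless `x = ε`. -/
def snoc' {A V : Type} (σ : List (TFVal A V)) : TFVal A V → List (TFVal A V)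
  | .eps => σ
  | x => σ ++ [x]

/-- `tf`, computed on the reversed action sequence. -/
def tfR {A D L V : Type} (Arch : ExtArch D L) (dm : A → D)
    (I : L → List A → A → TFVal A V) : List A → D → List (TFVal A V)
  | [], _ => []
  | a :: ρ, u =>
    match Arch.edge (dm a) u with
    | none => tfR Arch dm I ρ u
    | some none => tfR Arch dm I ρ u ++ [TFVal.pair (tfR Arch dm I ρ (dm a)) a]
    | some (some f) => snoc' (tfR Arch dm I ρ u) (I f ρ.reverse a)

/-- `tf Arch dm I α u` : maximal information domain `u` is permitted to have after `α`. -/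
def tf {A D L V : Type} (Arch : ExtArch D L) (dm : A → D)
    (I : L → List A → A → TFVal A V) (α : List A) (u : D) : List (TFVal A V) :=
  tfR Arch dm I α.reverse u

/-- `inF Arch dm I α a u` : the information `in_{dom(a),u}(α, a)` transmitted to `u`
when action `a` is performed after `α`. -/
def inF {A D L V : Type} (Arch : ExtArch D L) (dm : A → D)
    (I : L → List A → A → TFVal A V) (α : List A) (a : A) (u : D) : TFVal A V :=
  match Arch.edge (dm a) u with
  | none => TFVal.eps
  | some none => TFVal.pair (tf Arch dm I α (dm a)) a
  | some (some f) => I f α a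
/-- A strongly non-conflating interpreted architecture. -/
def StronglyNonConflating {A D L V : Type} (Arch : ExtArch D L) (dm : A → D)
    (I : L → List A → A → TFVal A V) : Prop :=
  ∀ (u v w : D) (f : L), Arch.edge u w = some (some f) → Arch.edge v w = some none →
    ∀ (a b : A), dm a = u → dm b = v →
      ∀ (α β : List A), I f α a ≠ TFVal.pair (tf Arch dm I β v) b

/-- A compatible interpretation: `𝕀(f)` is `tf_u`-compatible for every edge
`u ↝_f v` with `f ∈ L`. -/
def Compatible {A D L V : Type} (Arch : ExtArch D L) (dm : A → D)
    (I : L → List A → A → TFVal A V) : Prop :=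
  ∀ (u v : D) (f : L), Arch.edge u v = some (some f) →
    ∀ (α β : List A), tf Arch dm I α u = tf Arch dm I β u →
      ∀ (a : A), dm a = u → I f α a = I f β a
/-- `r` is a refinement mapping from `(A₁, dm₁, I₁)` to `(A₂, dm₂, I₂)`,
i.e. conditions T1–T3 hold. -/
def TRef {A D₁ D₂ L₁ L₂ V₁ V₂ : Type} (A₁ : ExtArch D₁ L₁) (dm₁ : A → D₁)
    (I₁ : L₁ → List A → A → TFVal A V₁) (A₂ : ExtArch D₂ L₂) (dm₂ : A → D₂)
    (I₂ : L₂ → List A → A → TFVal A V₂) (r : D₁ → D₂) : Prop :=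
  -- T1
  (Function.Surjective r ∧ dm₂ = r ∘ dm₁) ∧
  -- T2
  (∀ (u v : D₁) (α : List A) (a : A), dm₁ a = u →
    inF A₂ dm₂ I₂ α a (r v) = TFVal.eps → inF A₁ dm₁ I₁ α a v = TFVal.eps) ∧
  -- T3
  (∀ (v : D₁) (α β : List A) (a b : A),
    inF A₂ dm₂ I₂ α a (r v) = inF A₂ dm₂ I₂ β b (r v) →
    inF A₂ dm₂ I₂ α a (r v) ≠ TFVal.eps →
    (a = b ∧ A₂.edge (dm₂ a) (r v) = some none) ∨
      inF A₁ dm₁ I₁ α a v = inF A₁ dm₁ I₁ β b v)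
/-- Condition S1: `r` is onto `D₂` and `dm₂ = r ∘ dm₁`. -/
def CondS1 {A D₁ D₂ : Type} (dm₁ : A → D₁) (dm₂ : A → D₂) (r : D₁ → D₂) : Prop :=
  Function.Surjective r ∧ dm₂ = r ∘ dm₁

/-- Condition S2: `⊤`-edges are mapped to `⊤`-edges. -/
def CondS2 {D₁ D₂ L₁ L₂ : Type} (A₁ : ExtArch D₁ L₁) (A₂ : ExtArch D₂ L₂)
    (r : D₁ → D₂) : Prop :=
  ∀ u v : D₁, A₁.edge u v = some none → A₂.edge (r u) (r v) = some none

/-- Condition S3. -/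
def CondS3 {A D₁ D₂ L₁ L₂ V₁ V₂ : Type} (A₁ : ExtArch D₁ L₁) (dm₁ : A → D₁)
    (I₁ : L₁ → List A → A → TFVal A V₁) (A₂ : ExtArch D₂ L₂)
    (I₂ : L₂ → List A → A → TFVal A V₂) (r : D₁ → D₂) : Prop :=
  ∀ (u v : D₁) (f₁ : L₁), A₁.edge u v = some (some f₁) →
    ∃ f₂ : Option L₂, A₂.edge (r u) (r v) = some f₂ ∧
      (f₂ = none ∨ ∃ g₂ : L₂, f₂ = some g₂ ∧
        ∀ (α : List A) (a : A), dm₁ a = u →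
          I₂ g₂ α a = TFVal.eps → I₁ f₁ α a = TFVal.eps)

/-- Condition S4. -/
def CondS4 {A D₁ D₂ L₁ L₂ V₁ V₂ : Type} (A₁ : ExtArch D₁ L₁) (dm₁ : A → D₁)
    (I₁ : L₁ → List A → A → TFVal A V₁) (A₂ : ExtArch D₂ L₂) (dm₂ : A → D₂)
    (I₂ : L₂ → List A → A → TFVal A V₂) (r : D₁ → D₂) : Prop :=
  ∀ (u : D₁) (a b : A) (f₂ g₂ : L₂),
    A₂.edge (dm₂ a) (r u) = some (some f₂) →
    A₂.edge (dm₂ b) (r u) = some (some g₂) →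
    -- (a)
    ((A₁.edge (dm₁ a) u = none ∧ A₁.edge (dm₁ b) u = none) ∨
    -- (b)
    (∃ f₁ : L₁, A₁.edge (dm₁ a) u = some (some f₁) ∧ A₁.edge (dm₁ b) u = none ∧
      ∀ (α β : List A), I₂ f₂ α a = I₂ g₂ β b → I₂ f₂ α a ≠ TFVal.eps →
        I₁ f₁ α a = TFVal.eps) ∨
    -- (c)
    (A₁.edge (dm₁ a) u = none ∧ ∃ g₁ : L₁, A₁.edge (dm₁ b) u = some (some g₁) ∧
      ∀ (α β : List A), I₂ f₂ α a = I₂ g₂ β b → I₂ f₂ α a ≠ TFVal.eps →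
        I₁ g₁ β b = TFVal.eps) ∨
    -- (d)
    (∃ f₁ g₁ : L₁, A₁.edge (dm₁ a) u = some (some f₁) ∧
      A₁.edge (dm₁ b) u = some (some g₁) ∧
      ∀ (α β : List A), I₂ f₂ α a = I₂ g₂ β b → I₂ f₂ α a ≠ TFVal.eps →
        I₁ f₁ α a = I₁ g₁ β b))


/-! T1 is S1. For T2, S2 and S3 say that whenever `u ↝₁ v` carries information, so does
`r u ↝₂ r v`, and an empty filter in the abstract architecture forces an empty filter in the
concrete one. For T3, strong non-conflation of `𝒜ℐ₂` rules out that a `⊤`-input coincides with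
a filtered one, so two equal nonempty inputs to `r v` are either both `⊤`-inputs, hence the same
action, or both filtered, and then S4 transfers the equality to the inputs to `v`. -/

section InF

variable {A D L V : Type} {Arch : ExtArch D L} {dm : A → D} {I : L → List A → A → TFVal A V}
  {α β : List A} {a b : A} {w : D}

@[simp]
lemma inF_of_edge_none (h : Arch.edge (dm a) w = none) : inF Arch dm I α a w = .eps := by
  simp [inF, h]

@[simp]
lemma inF_of_edge_top (h : Arch.edge (dm a) w = some none) :
    inF Arch dm I α a w = .pair (tf Arch dm I α (dm a)) a := by
  simp [inF, h]

@[simp]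
lemma inF_of_edge_label {f : L} (h : Arch.edge (dm a) w = some (some f)) :
    inF Arch dm I α a w = I f α a := by
  simp [inF, h]

lemma StronglyNonConflating.inF_eq_cases (hs : StronglyNonConflating Arch dm I)
    (heq : inF Arch dm I α a w = inF Arch dm I β b w) (hne : inF Arch dm I α a w ≠ .eps) :
    (a = b ∧ Arch.edge (dm a) w = some none) ∨
      ∃ f g : L, Arch.edge (dm a) w = some (some f) ∧ Arch.edge (dm b) w = some (some g) ∧
        I f α a = I g β b ∧ I f α a ≠ .eps := by
  rcases hea : Arch.edge (dm a) w with _ | _ | f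
  · simp [hea] at hne
  · rcases heb : Arch.edge (dm b) w with _ | _ | g
    · simp [hea, heb] at heq
    · simp only [inF_of_edge_top hea, inF_of_edge_top heb, TFVal.pair.injEq] at heq
      exact .inl ⟨heq.2, rfl⟩
    · rw [inF_of_edge_top hea, inF_of_edge_label heb] at heq
      exact absurd heq.symm (hs _ _ _ g heb hea b a rfl rfl β α)
  · rcases heb : Arch.edge (dm b) w with _ | _ | g
    · exact absurd (heq.trans (inF_of_edge_none heb)) hne
    · rw [inF_of_edge_label hea, inF_of_edge_top heb] at heq
      exact absurd heq (hs _ _ _ f hea heb a b rfl rfl α β)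
    · rw [inF_of_edge_label hea, inF_of_edge_label heb] at heq
      rw [inF_of_edge_label hea] at hne
      exact .inr ⟨f, g, rfl, rfl, heq, hne⟩

end InF

section Refinement

variable {A D₁ D₂ L₁ L₂ V₁ V₂ : Type}
  {A₁ : ExtArch D₁ L₁} {dm₁ : A → D₁} {I₁ : L₁ → List A → A → TFVal A V₁}
  {A₂ : ExtArch D₂ L₂} {dm₂ : A → D₂} {I₂ : L₂ → List A → A → TFVal A V₂}
  {r : D₁ → D₂} {α β : List A} {a b : A} {v : D₁}

lemma inF_eq_eps_of_condS2_of_condS3 (hdm : dm₂ = r ∘ dm₁) (h2 : CondS2 A₁ A₂ r)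
    (h3 : CondS3 A₁ dm₁ I₁ A₂ I₂ r) (h : inF A₂ dm₂ I₂ α a (r v) = .eps) :
    inF A₁ dm₁ I₁ α a v = .eps := by
  have hdma : dm₂ a = r (dm₁ a) := congrFun hdm a
  rcases he : A₁.edge (dm₁ a) v with _ | _ | f₁
  · exact inF_of_edge_none he
  · simp [hdma, h2 _ _ he] at h
  · obtain ⟨f₂, hf₂, rfl | ⟨g₂, rfl, hg⟩⟩ := h3 _ _ _ he
    · simp [hdma, hf₂] at h
    · rw [inF_of_edge_label (hdma ▸ hf₂)] at h
      rw [inF_of_edge_label he]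
      exact hg α a rfl h

lemma CondS4.inF_eq (h4 : CondS4 A₁ dm₁ I₁ A₂ dm₂ I₂ r) {f₂ g₂ : L₂}
    (hf₂ : A₂.edge (dm₂ a) (r v) = some (some f₂)) (hg₂ : A₂.edge (dm₂ b) (r v) = some (some g₂))
    (heq : I₂ f₂ α a = I₂ g₂ β b) (hne : I₂ f₂ α a ≠ .eps) :
    inF A₁ dm₁ I₁ α a v = inF A₁ dm₁ I₁ β b v := by
  rcases h4 v a b f₂ g₂ hf₂ hg₂ with ⟨ha, hb⟩ | ⟨f₁, ha, hb, hI⟩ | ⟨ha, g₁, hb, hI⟩ |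
      ⟨f₁, g₁, ha, hb, hI⟩
  · simp [ha, hb]
  · simpa [ha, hb] using hI α β heq hne
  · simpa [ha, hb] using (hI α β heq hne).symm
  · simpa [ha, hb] using hI α β heq hne

end Refinement

theorem statement16_general {A D₁ D₂ L₁ L₂ V₁ V₂ : Type}
    (A₁ : ExtArch D₁ L₁) (dm₁ : A → D₁) (I₁ : L₁ → List A → A → TFVal A V₁)
    (A₂ : ExtArch D₂ L₂) (dm₂ : A → D₂) (I₂ : L₂ → List A → A → TFVal A V₂)
    (r : D₁ → D₂)
    (hs₂ : StronglyNonConflating A₂ dm₂ I₂)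
    (h1 : CondS1 dm₁ dm₂ r) (h2 : CondS2 A₁ A₂ r)
    (h3 : CondS3 A₁ dm₁ I₁ A₂ I₂ r)
    (h4 : CondS4 A₁ dm₁ I₁ A₂ dm₂ I₂ r) :
    TRef A₁ dm₁ I₁ A₂ dm₂ I₂ r := by
  refine ⟨h1, fun _ _ _ _ _ h => inF_eq_eps_of_condS2_of_condS3 h1.2 h2 h3 h, ?_⟩
  intro v α β a b heq hne
  obtain htop | ⟨f₂, g₂, hf₂, hg₂, hI, hIne⟩ := hs₂.inF_eq_cases heq hne
  · exact .inl htop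
  · exact .inr (h4.inF_eq hf₂ hg₂ hI hIne)

/-- if `𝒜ℐ₂` is strongly non-conflating (interpretations being
compatible) and `r` is a strict refinement mapping (S1–S4), then `r` satisfies
conditions T1–T3. -/
theorem statement16 {A D₁ D₂ L₁ L₂ V₁ V₂ : Type}
    (A₁ : ExtArch D₁ L₁) (dm₁ : A → D₁) (I₁ : L₁ → List A → A → TFVal A V₁)
    (A₂ : ExtArch D₂ L₂) (dm₂ : A → D₂) (I₂ : L₂ → List A → A → TFVal A V₂)
    (r : D₁ → D₂)
    (hc₁ : Compatible A₁ dm₁ I₁) (hc₂ : Compatible A₂ dm₂ I₂)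
    (hs₂ : StronglyNonConflating A₂ dm₂ I₂)
    (h1 : CondS1 dm₁ dm₂ r) (h2 : CondS2 A₁ A₂ r)
    (h3 : CondS3 A₁ dm₁ I₁ A₂ I₂ r)
    (h4 : CondS4 A₁ dm₁ I₁ A₂ dm₂ I₂ r) :
    TRef A₁ dm₁ I₁ A₂ dm₂ I₂ r :=
  statement16_general A₁ dm₁ I₁ A₂ dm₂ I₂ r hs₂ h1 h2 h3 h4
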